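/- arXiv:math/0312478 — 5 statements merged into one kernel-verified Lean document; each statement's English description precedes it below -/
import Mathlib

section
/- The dimension of the quotient ring A_μ = ℂ[z_1,...,z_N]/I_μ equals the multinomial coefficient N!/(μ_1!···μ_m!). -/
open MvPolynomial


noncomputable def indicFactor {N : ℕ} (y z : Fin N → ℂ) : MvPolynomial (Fin N) ℂ :=
  if h : ∃ i, y i ≠ z i then
    C (y h.choose - z h.choose)⁻¹ * (X h.choose - C (z h.choose))
  else 1

lemma eval_indicFactor_self {N : ℕ} (y z : Fin N → ℂ) (h : y ≠ z) :
    eval y (indicFactor y z) = 1 := by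
  have hex : ∃ i, y i ≠ z i := Function.ne_iff.mp h
  rw [indicFactor, dif_pos hex]
  have hne : y hex.choose - z hex.choose ≠ 0 := sub_ne_zero.mpr hex.choose_spec
  simp [inv_mul_cancel₀ hne]

lemma eval_indicFactor_other {N : ℕ} (y z : Fin N → ℂ) (h : y ≠ z) :
    eval z (indicFactor y z) = 0 := by
  have hex : ∃ i, y i ≠ z i := Function.ne_iff.mp h
  rw [indicFactor, dif_pos hex]
  simp

noncomputable def indicPoly {N : ℕ} (T : Finset (Fin N → ℂ)) (y : Fin N → ℂ) :
    MvPolynomial (Fin N) ℂ :=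
  ∏ z ∈ T.erase y, indicFactor y z

lemma eval_indicPoly_self {N : ℕ} (T : Finset (Fin N → ℂ)) (y : Fin N → ℂ) :
    eval y (indicPoly T y) = 1 := by
  rw [indicPoly, map_prod]
  exact Finset.prod_eq_one fun z hz =>
    eval_indicFactor_self y z (Ne.symm (Finset.ne_of_mem_erase hz))

lemma eval_indicPoly_other {N : ℕ} (T : Finset (Fin N → ℂ)) (y w : Fin N → ℂ)
    (hw : w ∈ T) (hne : w ≠ y) : eval w (indicPoly T y) = 0 := by
  rw [indicPoly, map_prod]
  exact Finset.prod_eq_zero (Finset.mem_erase.mpr ⟨hne, hw⟩)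
    (eval_indicFactor_other y w (Ne.symm hne))

lemma eval_surjective {N : ℕ} (T : Finset (Fin N → ℂ)) :
    Function.Surjective (fun p : MvPolynomial (Fin N) ℂ =>
      (fun y : T => eval (y : Fin N → ℂ) p)) := by
  classical
  intro f
  refine ⟨∑ y ∈ T.attach, C (f y) * indicPoly T y.1, ?_⟩
  funext w
  simp only [map_sum, map_mul, eval_C]
  rw [Finset.sum_eq_single w]
  · rw [eval_indicPoly_self, mul_one]
  · intro y _ hy
    rw [eval_indicPoly_other T y.1 w.1 w.2 (fun h => hy (Subtype.ext h).symm), mul_zero]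
  · intro h; exact absurd (Finset.mem_attach T w) h

lemma finrank_quotient_eq_card {N : ℕ} (S : Set (Fin N → ℂ)) (hS : S.Finite) :
    Module.finrank ℂ (MvPolynomial (Fin N) ℂ ⧸ vanishingIdeal ℂ S) = Nat.card S := by
  classical
  letI : Fintype S := hS.fintype
  let φ : MvPolynomial (Fin N) ℂ →ₐ[ℂ] (S → ℂ) :=
    Pi.algHom ℂ _ (fun y => aeval (y : Fin N → ℂ))
  have hφ : ∀ (p : MvPolynomial (Fin N) ℂ) (y : S), φ p y = eval (y : Fin N → ℂ) p := by
    intro p y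
    show aeval (y : Fin N → ℂ) p = eval (y : Fin N → ℂ) p
    rw [← coe_aeval_eq_eval]
    rfl
  have hker : vanishingIdeal ℂ S = RingHom.ker φ := by
    ext p
    rw [mem_vanishingIdeal_iff, RingHom.mem_ker]
    constructor
    · intro h; funext y; rw [hφ]; simpa using h y y.2
    · intro h x hx
      have := congrFun h ⟨x, hx⟩
      rw [hφ] at this; simpa using this
  have hsurj : Function.Surjective φ := by
    intro f
    obtain ⟨g, hg⟩ : ∃ g : hS.toFinset → ℂ, ∀ t, g t = f ⟨t.1, hS.mem_toFinset.mp t.2⟩ :=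
      ⟨fun t => f ⟨t.1, hS.mem_toFinset.mp t.2⟩, fun _ => rfl⟩
    obtain ⟨p, hp⟩ := eval_surjective hS.toFinset g
    refine ⟨p, ?_⟩
    funext y
    have := congrFun hp ⟨y.1, hS.mem_toFinset.mpr y.2⟩
    rw [hφ]
    simp only at this
    rw [this, hg]
  rw [hker]
  have e := Ideal.quotientKerAlgEquivOfSurjective hsurj
  rw [e.toLinearEquiv.finrank_eq, Module.finrank_pi, Nat.card_eq_fintype_card]



lemma card_orbit_eq (N m : ℕ) (μ : Fin m → ℕ) (a : Fin m → ℂ) (ha : Function.Injective a)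
    (c : Fin N → Fin m)
    (hμ : ∀ i, (Finset.univ.filter fun k => c k = i).card = μ i)
    (X : Fin N → ℂ) (hX : X = a ∘ c) :
    Nat.card {Y : Fin N → ℂ | ∃ σ : Equiv.Perm (Fin N), Y = X ∘ ⇑σ} =
      Nat.multinomial Finset.univ μ := by
  classical
  have hsum : ∑ i, μ i = N := by
    have := Finset.card_eq_sum_card_fiberwise (f := c) (s := Finset.univ) (t := Finset.univ)
      (fun x _ => Finset.mem_univ _)
    simp only [Finset.card_univ, Fintype.card_fin] at this
    rw [this]
    exact Finset.sum_congr rfl fun i _ => (hμ i).symm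
  set G := (Equiv.Perm (Fin N))ᵈᵐᵃ
  letI : Fintype G := Fintype.ofEquiv _ (DomMulAct.mk : Equiv.Perm (Fin N) ≃ G)
  have horb : {Y : Fin N → ℂ | ∃ σ : Equiv.Perm (Fin N), Y = X ∘ ⇑σ} = MulAction.orbit G X := by
    ext Y
    constructor
    · rintro ⟨σ, rfl⟩; exact ⟨DomMulAct.mk σ, rfl⟩
    · rintro ⟨g, rfl⟩; exact ⟨DomMulAct.mk.symm g, rfl⟩
  rw [horb]
  letI : Fintype (MulAction.orbit G X) := Set.fintypeRange _
  have key := MulAction.card_orbit_mul_card_stabilizer_eq_card_group G X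
  have hstab : Fintype.card (MulAction.stabilizer G X) = ∏ i, (μ i).factorial := by
    have e1 : {g : Equiv.Perm (Fin N) // c ∘ ⇑g = c} ≃ MulAction.stabilizer G X := by
      refine (Equiv.subtypeEquiv (DomMulAct.mk : Equiv.Perm (Fin N) ≃ G) fun g => ?_)
      rw [DomMulAct.mem_stabilizer_iff]
      simp only [Equiv.symm_apply_apply]
      subst hX
      constructor
      · intro h
        funext k
        show a (c (g k)) = a (c k)
        exact congrArg a (congrFun h k)
      · intro h
        funext k
        exact ha (congrFun h k)
    rw [← Fintype.card_congr e1, DomMulAct.stabilizer_card c]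
    exact Finset.prod_congr rfl fun i _ => by rw [Fintype.card_subtype, hμ i]
  have hG : Fintype.card G = N.factorial := by
    rw [← Fintype.card_congr (DomMulAct.mk : Equiv.Perm (Fin N) ≃ G)]
    simp [Fintype.card_perm]
  rw [hstab, hG] at key
  have hmul := Nat.multinomial_spec Finset.univ μ
  rw [hsum] at hmul
  have hpos : 0 < ∏ i, (μ i).factorial := Finset.prod_pos fun i _ => Nat.factorial_pos _
  rw [Nat.card_eq_fintype_card]
  refine Nat.eq_of_mul_eq_mul_right hpos ?_
  rw [key, ← hmul, mul_comm]


/-- For a point `X ∈ ℂ^N` whose coordinates take the `m`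
distinct values `a_1,…,a_m` with multiplicities `μ_1,…,μ_m` (so `Σμ_i = N`),
the quotient `A_μ = ℂ[z_1,…,z_N]/I_μ` by the ideal of polynomials vanishing on
the `S_N`-orbit of `X` has `ℂ`-dimension the multinomial coefficient
`N!/(μ_1!⋯μ_m!)`. -/
theorem finrank_quotient_orbit_vanishingIdeal
    (N m : ℕ) (μ : Fin m → ℕ) (a : Fin m → ℂ) (ha : Function.Injective a)
    (c : Fin N → Fin m) (hc : Monotone c)
    (hμ : ∀ i, (Finset.univ.filter fun k => c k = i).card = μ i)
    (X : Fin N → ℂ) (hX : X = a ∘ c) :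
    Module.finrank ℂ (MvPolynomial (Fin N) ℂ ⧸
        MvPolynomial.vanishingIdeal ℂ
          {Y : Fin N → ℂ | ∃ σ : Equiv.Perm (Fin N), Y = X ∘ ⇑σ}) =
      Nat.multinomial Finset.univ μ := by
  have hfin : {Y : Fin N → ℂ | ∃ σ : Equiv.Perm (Fin N), Y = X ∘ ⇑σ}.Finite := by
    have : {Y : Fin N → ℂ | ∃ σ : Equiv.Perm (Fin N), Y = X ∘ ⇑σ} =
        Set.range (fun σ : Equiv.Perm (Fin N) => X ∘ ⇑σ) := by
      ext Y; simp [Set.mem_range, eq_comm]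
    rw [this]
    exact Set.finite_range _
  rw [finrank_quotient_eq_card _ hfin, card_orbit_eq N m μ a ha c hμ X hX]
end

section
/- For a partition μ of length at most n, the hook-length product satisfies ∏_{x∈μ} (1 − q^{h(x)}) = ∏_{i=1}^{n} (q)_{μ_i + n − i} / ∏_{1 ≤ i < j ≤ n} (1 − q^{μ_i − μ_j + j − i}), where (q)_m = ∏_{k=1}^m (1 − q^k). -/
open Polynomial Finset

/-- `(q)_m = ∏_{k=1}^m (1 - q^k)`, as a polynomial in `q = X` over `ℤ`. -/
noncomputable def qPochhammer' (m : ℕ) : Polynomial ℤ :=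
  ∏ k ∈ Finset.range m, (1 - Polynomial.X ^ (k + 1))

/-- The conjugate partition: `μ'_j` is the number of parts of `μ` exceeding `j`
(0-indexed). -/
def conjugatePart {n : ℕ} (μ : Fin n → ℕ) (j : ℕ) : ℕ :=
  (Finset.univ.filter fun i : Fin n => j < μ i).card

/-- The hook length of the (0-indexed) box `(i,j)` of the Young diagram of `μ`:
`h(i,j) = μ_i - j + μ'_j - i - 1` (in 0-indexed form). -/
def hookLength {n : ℕ} (μ : Fin n → ℕ) (i : Fin n) (j : ℕ) : ℕ :=
  μ i + conjugatePart μ j - (i : ℕ) - j - 1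

private lemma conjugate_split {n : ℕ} (μ : Fin n → ℕ) (hμ : Antitone μ) (i : Fin n)
    {j : ℕ} (hj : j < μ i) :
    conjugatePart μ j = (i : ℕ) + 1 + ((Finset.Ioi i).filter fun k => j < μ k).card := by
  unfold conjugatePart
  have : (Finset.univ.filter fun k : Fin n => j < μ k)
      = Finset.Iic i ∪ (Finset.Ioi i).filter fun k => j < μ k := by
    ext k
    simp only [mem_filter, mem_univ, true_and, mem_union, mem_Iic, mem_Ioi]
    constructor
    · intro hk
      rcases le_or_gt k i with h | h
      · exact Or.inl h
      · exact Or.inr ⟨h, hk⟩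
    · rintro (h | ⟨_, h⟩)
      · exact lt_of_lt_of_le hj (hμ h)
      · exact h
  rw [this, Finset.card_union_of_disjoint, Fin.card_Iic]
  refine Finset.disjoint_left.2 fun k hk hk' => ?_
  rw [Finset.mem_Iic] at hk
  rw [Finset.mem_filter, Finset.mem_Ioi] at hk'
  exact absurd hk'.1 (not_lt.2 hk)

/-- Row lemma: the hooks of row `i` together with the differences `β_i - β_k`
for `k > i` form exactly `{1, …, μ_i + n - 1 - i}`. -/
private lemma row_lemma {n : ℕ} (μ : Fin n → ℕ) (hμ : Antitone μ) (i : Fin n) :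
    (∏ j ∈ Finset.range (μ i), (1 - (Polynomial.X : Polynomial ℤ) ^ hookLength μ i j)) *
      ∏ k ∈ Finset.Ioi i, (1 - (Polynomial.X : Polynomial ℤ) ^ (μ i - μ k + ((k : ℕ) - (i : ℕ)))) =
    qPochhammer' (μ i + (n - 1 - (i : ℕ))) := by
  set M := μ i with hM
  set c : ℕ → ℕ := fun j => ((Finset.Ioi i).filter fun k => j < μ k).card with hc
  set f : ℕ → ℕ := fun j => M - j + c j with hf
  set g : Fin n → ℕ := fun k => M - μ k + ((k : ℕ) - (i : ℕ)) with hg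
  have hin : (i : ℕ) < n := i.isLt
  -- c is antitone
  have hcanti : ∀ {j j' : ℕ}, j ≤ j' → c j' ≤ c j := by
    intro j j' h
    simp only [hc]
    apply Finset.card_le_card
    intro k hk
    rw [Finset.mem_filter] at hk ⊢
    exact ⟨hk.1, lt_of_le_of_lt h hk.2⟩
  -- c bounded
  have hcbound : ∀ j, c j ≤ n - 1 - (i : ℕ) := by
    intro j
    have h1 : c j ≤ (Finset.Ioi i).card :=
      Finset.card_le_card (Finset.filter_subset _ _)
    rw [Fin.card_Ioi] at h1
    exact h1
  -- hook formula
  have hhook : ∀ j ∈ Finset.range M, hookLength μ i j = f j := by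
    intro j hj
    rw [Finset.mem_range] at hj
    unfold hookLength
    rw [conjugate_split μ hμ i hj]
    simp only [hf, hc]
    omega
  -- injectivity of f (strictly decreasing)
  have hfinj : Set.InjOn f (Finset.range M) := by
    intro a ha b hb hab
    rw [Finset.coe_range, Set.mem_Iio] at ha hb
    by_contra hne
    rcases Nat.lt_or_ge a b with h | h
    · have := hcanti (le_of_lt h)
      simp only [hf] at hab; omega
    · have h : b < a := by omega
      have := hcanti (le_of_lt h)
      simp only [hf] at hab; omega
  -- injectivity of g on Ioi i (strictly increasing)
  have hgmono : ∀ {k k' : Fin n}, i < k → k < k' → g k < g k' := by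
    intro k k' hik hkk'
    have h1 : μ k' ≤ μ k := hμ (le_of_lt hkk')
    have h2 : μ k ≤ M := hμ (le_of_lt hik)
    have h3 : (i : ℕ) < (k : ℕ) := hik
    have h4 : (k : ℕ) < (k' : ℕ) := hkk'
    simp only [hg]; omega
  have hginj : Set.InjOn g (Finset.Ioi i) := by
    intro a ha b hb hab
    simp only [Finset.coe_Ioi, Set.mem_Ioi] at ha hb
    by_contra hne
    rcases lt_or_gt_of_ne hne with h | h
    · exact absurd hab (ne_of_lt (hgmono ha h))
    · exact absurd hab.symm (ne_of_lt (hgmono hb h))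
  -- disjointness fact: f j < g k or g k < f j
  have hfg : ∀ j < M, ∀ k, i < k → f j ≠ g k := by
    intro j hj k hik
    have h2 : μ k ≤ M := hμ (le_of_lt hik)
    have h3 : (i : ℕ) < (k : ℕ) := hik
    rcases Nat.lt_or_ge j (μ k) with hcase | hcase
    · -- c j ≥ k - i
      have hsub : Finset.Ioc i k ⊆ (Finset.Ioi i).filter fun k' => j < μ k' := by
        intro k' hk'
        rw [Finset.mem_Ioc] at hk'
        rw [Finset.mem_filter, Finset.mem_Ioi]
        exact ⟨hk'.1, lt_of_lt_of_le hcase (hμ hk'.2)⟩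
      have hcard : (k : ℕ) - (i : ℕ) ≤ c j := by
        calc (k : ℕ) - (i : ℕ) = (Finset.Ioc i k).card := (Fin.card_Ioc i k).symm
        _ ≤ c j := Finset.card_le_card hsub
      simp only [hf, hg]; omega
    · -- c j ≤ k - i - 1
      have hsub : ((Finset.Ioi i).filter fun k' => j < μ k') ⊆ Finset.Ioo i k := by
        intro k' hk'
        rw [Finset.mem_filter, Finset.mem_Ioi] at hk'
        rw [Finset.mem_Ioo]
        refine ⟨hk'.1, ?_⟩
        by_contra hle
        exact absurd (lt_of_le_of_lt hcase hk'.2) (not_lt.2 (hμ (not_lt.1 hle)))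
      have hcard : c j ≤ (k : ℕ) - (i : ℕ) - 1 := by
        calc c j ≤ (Finset.Ioo i k).card := Finset.card_le_card hsub
        _ = (k : ℕ) - (i : ℕ) - 1 := Fin.card_Ioo i k
      simp only [hf, hg]; omega
  -- the two image sets
  set S := (Finset.range M).image f with hS
  set T := (Finset.Ioi i).image g with hT
  have hdisj : Disjoint S T := by
    rw [Finset.disjoint_left]
    intro m hmS hmT
    rw [hS, Finset.mem_image] at hmS
    rw [hT, Finset.mem_image] at hmT
    obtain ⟨j, hj, hj'⟩ := hmS
    obtain ⟨k, hk, hk'⟩ := hmT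
    rw [Finset.mem_range] at hj
    rw [Finset.mem_Ioi] at hk
    exact hfg j hj k hk (hj'.trans hk'.symm)
  have hcardS : S.card = M := by
    rw [hS, Finset.card_image_of_injOn hfinj, Finset.card_range]
  have hcardT : T.card = n - 1 - (i : ℕ) := by
    rw [hT, Finset.card_image_of_injOn hginj, Fin.card_Ioi]
  have hunion : S ∪ T = Finset.Icc 1 (M + (n - 1 - (i : ℕ))) := by
    apply Finset.eq_of_subset_of_card_le
    · intro m hm
      rw [Finset.mem_union] at hm
      rw [Finset.mem_Icc]
      rcases hm with hm | hm
      · rw [hS, Finset.mem_image] at hm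
        obtain ⟨j, hj, rfl⟩ := hm
        rw [Finset.mem_range] at hj
        have := hcbound j
        simp only [hf]; omega
      · rw [hT, Finset.mem_image] at hm
        obtain ⟨k, hk, rfl⟩ := hm
        rw [Finset.mem_Ioi] at hk
        have h2 : μ k ≤ M := hμ (le_of_lt hk)
        have h3 : (i : ℕ) < (k : ℕ) := hk
        have h4 : (k : ℕ) < n := k.isLt
        simp only [hg]; omega
    · rw [Nat.card_Icc, Finset.card_union_of_disjoint hdisj, hcardS, hcardT]
      omega
  calc (∏ j ∈ Finset.range M, (1 - (Polynomial.X : Polynomial ℤ) ^ hookLength μ i j)) *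
      ∏ k ∈ Finset.Ioi i, (1 - (Polynomial.X : Polynomial ℤ) ^ (M - μ k + ((k : ℕ) - (i : ℕ))))
      = (∏ m ∈ S, (1 - (Polynomial.X : Polynomial ℤ) ^ m)) *
        ∏ m ∈ T, (1 - (Polynomial.X : Polynomial ℤ) ^ m) := by
        rw [hS, hT, Finset.prod_image hfinj, Finset.prod_image hginj]
        exact congrArg₂ (· * ·) (Finset.prod_congr rfl fun j hj => by rw [hhook j hj]) rfl
    _ = ∏ m ∈ S ∪ T, (1 - (Polynomial.X : Polynomial ℤ) ^ m) :=
        (Finset.prod_union hdisj).symm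
    _ = ∏ m ∈ Finset.Icc 1 (M + (n - 1 - (i : ℕ))), (1 - (Polynomial.X : Polynomial ℤ) ^ m) := by
        rw [hunion]
    _ = qPochhammer' (M + (n - 1 - (i : ℕ))) := by
        unfold qPochhammer'
        rw [show Finset.Icc 1 (M + (n - 1 - (i : ℕ)))
            = (Finset.range (M + (n - 1 - (i : ℕ)))).image (· + 1) by
          ext m
          simp only [Finset.mem_Icc, Finset.mem_image, Finset.mem_range]
          constructor
          · intro h; exact ⟨m - 1, by omega, by omega⟩
          · rintro ⟨a, ha, rfl⟩; omega]
        rw [Finset.prod_image (fun a _ b _ h => by omega)]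

/-- For a partition `μ = (μ_1 ≥ … ≥ μ_n ≥ 0)` with at most `n`
parts, the hook-length product satisfies
`∏_{x∈μ} (1 - q^{h(x)}) = ∏_{i=1}^n (q)_{μ_i+n-i} / ∏_{1≤i<j≤n} (1 - q^{μ_i-μ_j+j-i})`,
stated with denominators cleared as an identity of polynomials in `q`. -/
theorem hook_product_identity (n : ℕ) (μ : Fin n → ℕ) (hμ : Antitone μ) :
    (∏ i : Fin n, ∏ j ∈ Finset.range (μ i),
        (1 - Polynomial.X ^ hookLength μ i j)) *
      ∏ p ∈ Finset.univ.filter (fun p : Fin n × Fin n => p.1 < p.2),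
        (1 - (Polynomial.X : Polynomial ℤ) ^ (μ p.1 - μ p.2 + ((p.2 : ℕ) - (p.1 : ℕ)))) =
    ∏ i : Fin n, qPochhammer' (μ i + (n - 1 - (i : ℕ))) := by
  have hpairs : (∏ p ∈ Finset.univ.filter (fun p : Fin n × Fin n => p.1 < p.2),
        (1 - (Polynomial.X : Polynomial ℤ) ^ (μ p.1 - μ p.2 + ((p.2 : ℕ) - (p.1 : ℕ)))))
      = ∏ i : Fin n, ∏ k ∈ Finset.Ioi i,
        (1 - (Polynomial.X : Polynomial ℤ) ^ (μ i - μ k + ((k : ℕ) - (i : ℕ)))) := by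
    rw [Finset.prod_filter]
    rw [Fintype.prod_prod_type]
    apply Finset.prod_congr rfl
    intro i _
    rw [← Finset.prod_filter]
    congr 1
    ext k
    simp [Finset.mem_Ioi]
  rw [hpairs, ← Finset.prod_mul_distrib]
  exact Finset.prod_congr rfl fun i _ => row_lemma μ hμ i
end

section
/- Let π = ℂ^n be the standard representation of gl_n with highest weight vector v_0, and let w_0 = (v_0 ⊗ ... ⊗ v_0) ⊗ 1 ∈ π^{⊗N} ⊗ ℂ[z_1,...,z_N]. Then the S_N-invariant subspace (π^{⊗N} ⊗ ℂ[z_1,...,z_N])^{S_N} (diagonal S_N-action) equals U(gl_n ⊗ ℂ[t]) · w_0, where x ⊗ t^k acts on the i-th tensor factor by x ⊗ multiplication by z_i^k, summed over i. -/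
open MvPolynomial Finset

/-- The model for `π^{⊗N} ⊗ ℂ[z_1,…,z_N]` with `π = ℂ^n`: functions on words
`w : Fin N → Fin n` (the standard tensor basis of `π^{⊗N}`) with values in
`ℂ[z_1,…,z_N]`. -/
abbrev VN (N n : ℕ) : Type := (Fin N → Fin n) → MvPolynomial (Fin N) ℂ

/-- The diagonal action of `σ ∈ S_N`, permuting tensor factors and polynomial
variables simultaneously. -/
noncomputable def diagAct {N n : ℕ} (σ : Equiv.Perm (Fin N)) (F : VN N n) : VN N n :=
  fun w => MvPolynomial.rename (⇑σ) (F (w ∘ ⇑σ))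

/-- The cyclic vector `w₀ = v₀ ⊗ ⋯ ⊗ v₀ ⊗ 1`. -/
noncomputable def w0 (N n : ℕ) [NeZero n] : VN N n :=
  fun w => if w = (fun _ => (0 : Fin n)) then 1 else 0

/-- The action of the current algebra element `x ⊗ t^k` on the tensor product of
formal evaluation modules: `x` acts in the `i`-th tensor factor together with
multiplication by `z_i^k`, summed over `i`. -/
noncomputable def currentOp {N n : ℕ} (x : Matrix (Fin n) (Fin n) ℂ) (k : ℕ)
    (F : VN N n) : VN N n :=
  fun v => ∑ i : Fin N, MvPolynomial.X i ^ k *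
    ∑ a : Fin n, MvPolynomial.C (x (v i) a) * F (Function.update v i a)

/-!
Both sides are spanned by symmetrizations. The span is `S_N`-invariant because `S_N` fixes `w₀`
and commutes with every `x ⊗ t^k`. Conversely, an invariant vector is `1/N!` times its own
symmetrization, so it suffices to reach the symmetrization of each basis vector
`v_{a₁} ⊗ ⋯ ⊗ v_{a_N} ⊗ z₁^{k₁} ⋯ z_N^{k_N}`, recorded as a labelling `i ↦ (aᵢ, kᵢ)`.
This goes by induction on the set of positions with a label other than `(0, 0)`: clear the
label `(a, k)` at one such position `i₀` and apply `E_{a0} ⊗ t^k` to the symmetrization of the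
result. This turns, one position at a time, a label `(0, m)` into `(a, m + k)`. At a
position with label `(0, 0)` the outcome is the original labelling up to a permutation (this
happens at least once, at `i₀`); at any other position it is a labelling with fewer
nontrivial positions.
-/

theorem Submodule.mem_of_nsmul_mem {K V : Type*} [DivisionSemiring K] [CharZero K]
    [AddCommMonoid V] [Module K V] (p : Submodule K V) {m : ℕ} (hm : m ≠ 0) {v : V}
    (h : m • v ∈ p) : v ∈ p := by
  rw [← Nat.cast_smul_eq_nsmul K] at h
  exact (p.smul_mem_iff (Nat.cast_ne_zero.2 hm)).1 h

namespace CurrentAlgebraInvariants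

variable {N n : ℕ}

noncomputable def diagActL (σ : Equiv.Perm (Fin N)) : VN N n →ₗ[ℂ] VN N n where
  toFun := diagAct σ
  map_add' F G := by funext v; simp [diagAct]
  map_smul' c F := by funext v; simp [diagAct]

@[simp] lemma diagActL_apply (σ : Equiv.Perm (Fin N)) (F : VN N n) :
    diagActL σ F = diagAct σ F := rfl

noncomputable def currentOpL (x : Matrix (Fin n) (Fin n) ℂ) (k : ℕ) :
    VN N n →ₗ[ℂ] VN N n where
  toFun := currentOp x k
  map_add' F G := by funext v; simp [currentOp, mul_add, Finset.sum_add_distrib]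
  map_smul' c F := by
    funext v
    simp only [currentOp, Pi.smul_apply, smul_eq_C_mul, RingHom.id_apply, Finset.mul_sum]
    exact Finset.sum_congr rfl fun i _ => Finset.sum_congr rfl fun a _ => by ring

@[simp] lemma currentOpL_apply (x : Matrix (Fin n) (Fin n) ℂ) (k : ℕ) (F : VN N n) :
    currentOpL x k F = currentOp x k F := rfl

lemma diagAct_diagAct (σ τ : Equiv.Perm (Fin N)) (F : VN N n) :
    diagAct σ (diagAct τ F) = diagAct (σ * τ) F := by
  funext v
  simp only [diagAct, rename_rename]
  rfl

lemma diagAct_currentOp (σ : Equiv.Perm (Fin N)) (x : Matrix (Fin n) (Fin n) ℂ) (k : ℕ)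
    (F : VN N n) : diagAct σ (currentOp x k F) = currentOp x k (diagAct σ F) := by
  funext v
  simp only [diagAct, currentOp, map_sum, map_mul, map_pow, rename_X, rename_C]
  refine Fintype.sum_equiv σ _ _ fun i => ?_
  simp [Function.update_comp_equiv]

noncomputable def symmetrize : VN N n →ₗ[ℂ] VN N n := ∑ σ, diagActL σ

lemma symmetrize_apply (F : VN N n) : symmetrize F = ∑ σ, diagAct σ F := by
  simp [symmetrize]

lemma symmetrize_diagAct (τ : Equiv.Perm (Fin N)) (F : VN N n) :
    symmetrize (diagAct τ F) = symmetrize F := by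
  simp only [symmetrize_apply, diagAct_diagAct]
  exact Fintype.sum_equiv (Equiv.mulRight τ) _ _ fun σ => rfl

lemma symmetrize_of_forall_diagAct_eq {F : VN N n} (hF : ∀ σ, diagAct σ F = F) :
    symmetrize F = Fintype.card (Equiv.Perm (Fin N)) • F := by
  simp [symmetrize_apply, hF, Finset.card_univ]

lemma currentOp_symmetrize (x : Matrix (Fin n) (Fin n) ℂ) (k : ℕ) (F : VN N n) :
    currentOp x k (symmetrize F) = symmetrize (currentOp x k F) := by
  rw [symmetrize_apply, symmetrize_apply, ← currentOpL_apply, map_sum]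
  simp [diagAct_currentOp]

/-- The labelling `c` encodes `v_{(c 1).1} ⊗ ⋯ ⊗ v_{(c N).1} ⊗ z₁^{(c 1).2} ⋯ z_N^{(c N).2}`. -/
noncomputable def tensorMonomial (c : Fin N → Fin n × ℕ) : VN N n :=
  Pi.single (fun i => (c i).1) (monomial (Finsupp.equivFunOnFinite.symm fun i => (c i).2) 1)

lemma tensorMonomial_zero [NeZero n] : tensorMonomial (0 : Fin N → Fin n × ℕ) = w0 N n := by
  have hd : (Finsupp.equivFunOnFinite.symm fun _ => 0 : Fin N →₀ ℕ) = 0 := by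
    ext; simp
  funext v
  simp [tensorMonomial, w0, Pi.single_apply, hd]

lemma diagAct_tensorMonomial (σ : Equiv.Perm (Fin N)) (c : Fin N → Fin n × ℕ) :
    diagAct σ (tensorMonomial c) = tensorMonomial (c ∘ σ.symm) := by
  have hd : Finsupp.mapDomain σ (Finsupp.equivFunOnFinite.symm fun i => (c i).2) =
      Finsupp.equivFunOnFinite.symm fun i => (c (σ.symm i)).2 := by
    ext j; simp
  funext v
  simp only [diagAct, tensorMonomial, Pi.single_apply, ← σ.eq_comp_symm]
  simp only [Function.comp_def]
  split_ifs <;> simp [rename_monomial, hd]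

lemma span_range_tensorMonomial :
    Submodule.span ℂ (Set.range (tensorMonomial : (Fin N → Fin n × ℕ) → VN N n)) = ⊤ := by
  refine eq_top_iff.2 ((Pi.basis fun _ => basisMonomials (Fin N) ℂ).span_eq.ge.trans
    (Submodule.span_mono ?_))
  rintro _ ⟨⟨w, d⟩, rfl⟩
  exact ⟨fun i => (w i, d i), by simp [tensorMonomial]⟩

lemma diagAct_w0 [NeZero n] (σ : Equiv.Perm (Fin N)) : diagAct σ (w0 N n) = w0 N n := by
  rw [← tensorMonomial_zero, diagAct_tensorMonomial]
  rfl

lemma symmetrize_tensorMonomial_comp (τ : Equiv.Perm (Fin N)) (c : Fin N → Fin n × ℕ) :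
    symmetrize (tensorMonomial (c ∘ τ)) = symmetrize (tensorMonomial c) := by
  rw [← symmetrize_diagAct τ.symm (tensorMonomial c), diagAct_tensorMonomial, Equiv.symm_symm]

lemma currentOp_single_piSingle (a b : Fin n) (k : ℕ) (w : Fin N → Fin n)
    (p : MvPolynomial (Fin N) ℂ) :
    currentOp (Matrix.single a b 1) k (Pi.single w p : VN N n) =
      ∑ i ∈ univ.filter (fun i => w i = b), Pi.single (Function.update w i a) (X i ^ k * p) := by
  funext v
  simp only [currentOp, Finset.sum_apply, Pi.single_apply, Matrix.single_apply, Finset.sum_filter]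
  refine Finset.sum_congr rfl fun i _ => ?_
  simp only [Function.update_eq_iff, Function.eq_update_iff]
  rw [Finset.sum_eq_single b (fun b' _ hb' => by simp [Ne.symm hb']) (by simp)]
  split_ifs <;> grind

lemma currentOp_single_tensorMonomial (a b : Fin n) (k : ℕ) (c : Fin N → Fin n × ℕ) :
    currentOp (Matrix.single a b 1) k (tensorMonomial c) =
      ∑ i ∈ univ.filter (fun i => (c i).1 = b),
        tensorMonomial (Function.update c i (a, (c i).2 + k)) := by
  rw [tensorMonomial, currentOp_single_piSingle]
  refine Finset.sum_congr rfl fun i _ => ?_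
  have hfst : (fun j => (Function.update c i (a, (c i).2 + k) j).1) =
      Function.update (fun j => (c j).1) i a := by
    funext j
    rcases eq_or_ne j i with rfl | hj <;> simp [*]
  have hsnd : Finsupp.single i k + Finsupp.equivFunOnFinite.symm (fun j => (c j).2) =
      Finsupp.equivFunOnFinite.symm fun j => (Function.update c i (a, (c i).2 + k) j).2 := by
    ext j
    rcases eq_or_ne j i with rfl | hj <;> simp [*, add_comm]
  rw [tensorMonomial, hfst, ← hsnd, X_pow_eq_monomial, monomial_mul, one_mul]

noncomputable def currentSpan (N n : ℕ) [NeZero n] : Submodule ℂ (VN N n) :=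
  Submodule.span ℂ {F | ∃ l : List (Matrix (Fin n) (Fin n) ℂ × ℕ),
    F = l.foldr (fun p G => currentOp p.1 p.2 G) (w0 N n)}

variable [NeZero n]

lemma w0_mem_currentSpan : w0 N n ∈ currentSpan N n :=
  Submodule.subset_span ⟨[], rfl⟩

lemma currentOp_mem_currentSpan (x : Matrix (Fin n) (Fin n) ℂ) (k : ℕ) {F : VN N n}
    (hF : F ∈ currentSpan N n) : currentOp x k F ∈ currentSpan N n := by
  have hle : currentSpan N n ≤ (currentSpan N n).comap (currentOpL x k) := by
    refine Submodule.span_le.2 ?_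
    rintro _ ⟨l, rfl⟩
    exact Submodule.subset_span ⟨(x, k) :: l, rfl⟩
  exact hle hF

lemma diagAct_eq_self_of_mem_currentSpan {F : VN N n} (hF : F ∈ currentSpan N n)
    (σ : Equiv.Perm (Fin N)) : diagAct σ F = F := by
  have hle : currentSpan N n ≤ (diagActL σ).eqLocus LinearMap.id := by
    refine Submodule.span_le.2 ?_
    rintro _ ⟨l, rfl⟩
    induction l with
    | nil => exact diagAct_w0 σ
    | cons p l ih => exact (diagAct_currentOp σ p.1 p.2 _).trans (congrArg _ ih)
  exact hle hF

lemma symmetrize_tensorMonomial_mem_currentSpan (c : Fin N → Fin n × ℕ) :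
    symmetrize (tensorMonomial c) ∈ currentSpan N n := by
  suffices h : ∀ s : Finset (Fin N), ∀ c : Fin N → Fin n × ℕ, (∀ i ∉ s, c i = 0) →
      symmetrize (tensorMonomial c) ∈ currentSpan N n from h univ c (by simp)
  intro s
  induction s using Finset.induction_on with
  | empty =>
    intro c hc
    obtain rfl : c = 0 := funext fun i => hc i (Finset.notMem_empty i)
    rw [tensorMonomial_zero, symmetrize_of_forall_diagAct_eq diagAct_w0]
    exact Submodule.smul_of_tower_mem _ _ w0_mem_currentSpan
  | insert i₀ s _ ih =>
    intro c hc
    set c' := Function.update c i₀ 0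
    have hc' : ∀ i ∉ s, c' i = 0 := by
      intro i hi
      rcases eq_or_ne i i₀ with rfl | hne
      · simp [c']
      · simpa [c', hne] using hc i (by simp [hne, hi])
    have hmove : ∀ i, c' i = 0 → Function.update c' i (c i₀) = c ∘ Equiv.swap i i₀ := by
      intro i hi
      rw [Equiv.comp_swap_eq_update]
      rcases eq_or_ne i i₀ with rfl | hne
      · simp [c']
      · rw [show c i = 0 by simpa [c', hne] using hi]
    set T := univ.filter fun i => (c' i).1 = 0
    set raise : Fin N → VN N n := fun i =>
      symmetrize (tensorMonomial (Function.update c' i ((c i₀).1, (c' i).2 + (c i₀).2)))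
    have hexpand : currentOp (Matrix.single (c i₀).1 0 1) (c i₀).2
        (symmetrize (tensorMonomial c')) =
          ∑ i ∈ T with c' i = 0, raise i + ∑ i ∈ T with c' i ≠ 0, raise i := by
      rw [Finset.sum_filter_add_sum_filter_not, currentOp_symmetrize,
        currentOp_single_tensorMonomial, map_sum]
    have hmoved : ∑ i ∈ T with c' i = 0, raise i =
        #{i ∈ T | c' i = 0} • symmetrize (tensorMonomial c) := by
      rw [← Finset.sum_const]
      refine Finset.sum_congr rfl fun i hi => ?_
      have hi : c' i = 0 := (Finset.mem_filter.1 hi).2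
      simp only [raise, hi, Prod.snd_zero, zero_add, Prod.mk.eta, hmove i hi,
        symmetrize_tensorMonomial_comp]
    have hrest : ∑ i ∈ T with c' i ≠ 0, raise i ∈ currentSpan N n := by
      refine Submodule.sum_mem _ fun i hi => ih _ fun j hj => ?_
      have hi : c' i ≠ 0 := (Finset.mem_filter.1 hi).2
      have hji : j ≠ i := by rintro rfl; exact hi (hc' j hj)
      simpa [hji] using hc' j hj
    have hi₀ : i₀ ∈ {i ∈ T | c' i = 0} := by simp [T, c']
    refine (currentSpan N n).mem_of_nsmul_mem (Finset.card_ne_zero_of_mem hi₀) ?_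
    rw [← hmoved, eq_sub_of_add_eq hexpand.symm]
    exact sub_mem (currentOp_mem_currentSpan _ _ (ih c' hc')) hrest

lemma symmetrize_mem_currentSpan (F : VN N n) : symmetrize F ∈ currentSpan N n := by
  have h : (⊤ : Submodule ℂ (VN N n)).map symmetrize ≤ currentSpan N n := by
    rw [← span_range_tensorMonomial, Submodule.map_span, Submodule.span_le]
    rintro _ ⟨_, ⟨c, rfl⟩, rfl⟩
    exact symmetrize_tensorMonomial_mem_currentSpan c
  exact h ⟨F, trivial, rfl⟩

lemma mem_currentSpan_of_forall_diagAct_eq {F : VN N n} (hF : ∀ σ, diagAct σ F = F) :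
    F ∈ currentSpan N n := by
  refine (currentSpan N n).mem_of_nsmul_mem (Fintype.card_ne_zero (α := Equiv.Perm (Fin N))) ?_
  rw [← symmetrize_of_forall_diagAct_eq hF]
  exact symmetrize_mem_currentSpan F

end CurrentAlgebraInvariants

/-- The `S_N`-invariant subspace of `π^{⊗N} ⊗ ℂ[z_1,…,z_N]`
(diagonal action) equals `U(gl_n ⊗ ℂ[t]) · w₀`, i.e. the `ℂ`-linear span of the
vectors obtained by applying finitely many current algebra operators `x ⊗ t^k`
to the cyclic vector `w₀ = v₀^{⊗N} ⊗ 1`. -/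
theorem invariants_eq_current_algebra_span (N n : ℕ) [NeZero n] :
    {F : VN N n | ∀ σ, diagAct σ F = F} =
      (Submodule.span ℂ
        {F : VN N n | ∃ l : List (Matrix (Fin n) (Fin n) ℂ × ℕ),
          F = l.foldr (fun p G => currentOp p.1 p.2 G) (w0 N n)} : Set (VN N n)) := by
  ext F
  exact ⟨CurrentAlgebraInvariants.mem_currentSpan_of_forall_diagAct_eq,
    fun hF σ => CurrentAlgebraInvariants.diagAct_eq_self_of_mem_currentSpan hF σ⟩
end

section
/- The space (π^{⊗N} ⊗ ℂ[z_1,...,z_N])^{S_N} is generated as a module over the ring of symmetric polynomials ℂ[z_1,...,z_N]^{S_N} by the subspace F_N = U(n_− ⊗ ℂ[t]) · w_0, where n_− is spanned by the commuting elements b_i = E_{1,i+1} (i = 1,...,n−1) of gl_n and w_0 = v_0^{⊗N} ⊗ 1. -/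
open MvPolynomial Finset

namespace Inv9

variable {N n : ℕ}

/-- Monomial with exponent function `b`. -/
noncomputable def Xb {N : ℕ} (b : Fin N → ℕ) : MvPolynomial (Fin N) ℂ := ∏ i, X i ^ b i

lemma rename_Xb (τ : Equiv.Perm (Fin N)) (b : Fin N → ℕ) :
    rename (⇑τ) (Xb b) = Xb (b ∘ ⇑τ.symm) := by
  simp only [Xb, map_prod, map_pow, rename_X, Function.comp]
  rw [← Equiv.prod_comp τ (fun j => X j ^ (b (τ.symm j)))]
  simp

lemma Xb_update (b : Fin N → ℕ) (j : Fin N) (e : ℕ) (hb : b j = 0) :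
    Xb (Function.update b j e) = X j ^ e * Xb b := by
  have h1 : (Xb (Function.update b j e) : MvPolynomial (Fin N) ℂ)
      = ∏ i, Function.update (fun i => (X i ^ b i : MvPolynomial (Fin N) ℂ)) j (X j ^ e) i := by
    refine Finset.prod_congr rfl fun i _ => ?_
    rcases eq_or_ne i j with rfl | h
    · simp
    · simp [Function.update_of_ne h]
  have h2 : (Xb b : MvPolynomial (Fin N) ℂ) = ∏ i ∈ univ \ {j}, X i ^ b i := by
    rw [Xb, Finset.prod_eq_mul_prod_sdiff_singleton_of_mem (mem_univ j)
      (fun i => (X i ^ b i : MvPolynomial (Fin N) ℂ)), hb, pow_zero, one_mul]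
  rw [h1, Finset.prod_update_of_mem (mem_univ j), ← h2]

end Inv9
namespace Inv9
variable {N n : ℕ}

lemma Xb_mul_single (b : Fin N → ℕ) (i : Fin N) (e : ℕ) :
    Xb (fun x => b x + if x = i then e else 0) = X i ^ e * Xb b := by
  simp only [Xb, pow_add]
  rw [Finset.prod_mul_distrib, mul_comm]
  congr 1
  have : ∀ x : Fin N, (X x ^ (if x = i then e else 0) : MvPolynomial (Fin N) ℂ)
      = if x = i then X x ^ e else 1 := by
    intro x; split <;> simp
  rw [Finset.prod_congr rfl (fun x _ => this x), Finset.prod_ite_eq' univ i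
    (fun x => (X x ^ e : MvPolynomial (Fin N) ℂ)), if_pos (mem_univ i)]

/-- Unnormalized symmetrization of the vector `δ_w ⊗ p`. -/
noncomputable def T (w : Fin N → Fin n) (p : MvPolynomial (Fin N) ℂ) : VN N n :=
  fun u => ∑ σ : Equiv.Perm (Fin N), if u ∘ ⇑σ = w then rename (⇑σ) p else 0

lemma T_zero (w : Fin N → Fin n) : T w 0 = 0 := by
  funext u; simp [T]

lemma T_add (w : Fin N → Fin n) (p q : MvPolynomial (Fin N) ℂ) :
    T w (p + q) = T w p + T w q := by
  funext u
  simp only [T, map_add, Pi.add_apply, ← Finset.sum_add_distrib]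
  exact Finset.sum_congr rfl fun σ _ => by split <;> simp

lemma T_sum {ι : Type*} (s : Finset ι) (w : Fin N → Fin n) (p : ι → MvPolynomial (Fin N) ℂ) :
    T w (∑ i ∈ s, p i) = ∑ i ∈ s, T w (p i) := by
  classical
  induction s using Finset.induction_on with
  | empty => simp [T_zero]
  | insert _ _ h ih => rw [Finset.sum_insert h, Finset.sum_insert h, T_add, ih]

lemma T_mul_symm (w : Fin N → Fin n) {q : MvPolynomial (Fin N) ℂ} (hq : q.IsSymmetric)
    (p : MvPolynomial (Fin N) ℂ) :
    T w (q * p) = fun u => q * T w p u := by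
  funext u
  simp only [T, map_mul, Finset.mul_sum]
  exact Finset.sum_congr rfl fun σ _ => by split <;> simp [hq σ]

lemma isSymmetric_C (c : ℂ) : (C c : MvPolynomial (Fin N) ℂ).IsSymmetric :=
  fun e => rename_C _ c

lemma T_csmul (w : Fin N → Fin n) (c : ℂ) (p : MvPolynomial (Fin N) ℂ) :
    T w (c • p) = c • T w p := by
  rw [smul_eq_C_mul, T_mul_symm w (isSymmetric_C c) p]
  funext u
  rw [Pi.smul_apply, smul_eq_C_mul]

lemma comp_perm_cancel (τ : Equiv.Perm (Fin N)) {u v : Fin N → Fin n} :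
    u ∘ ⇑τ = v ∘ ⇑τ ↔ u = v :=
  ⟨fun h => by funext x; simpa using congrFun h (τ.symm x), fun h => by rw [h]⟩

lemma T_perm (w : Fin N → Fin n) (τ : Equiv.Perm (Fin N)) (p : MvPolynomial (Fin N) ℂ) :
    T (w ∘ ⇑τ) p = T w (rename (⇑τ) p) := by
  funext u
  have h := Equiv.sum_comp (Equiv.mulRight τ)
    (fun ρ : Equiv.Perm (Fin N) => if u ∘ ⇑ρ = w ∘ ⇑τ then rename (⇑ρ) p else 0)
  simp only [T]
  rw [← h]
  refine Finset.sum_congr rfl fun σ _ => ?_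
  simp only [Equiv.coe_mulRight]
  rw [rename_rename]
  have hco : ⇑(σ * τ) = ⇑σ ∘ ⇑τ := rfl
  refine if_congr ?_ (by rw [hco]) rfl
  rw [hco, show u ∘ (⇑σ ∘ ⇑τ) = (u ∘ ⇑σ) ∘ ⇑τ from rfl, comp_perm_cancel τ]

end Inv9
namespace Inv9
variable {N n : ℕ}

lemma update_comp (u : Fin N → Fin n) (σ : Equiv.Perm (Fin N)) (i : Fin N) (a : Fin n) :
    Function.update u (σ i) a ∘ ⇑σ = Function.update (u ∘ ⇑σ) i a := by
  rw [Function.update_comp_equiv u σ (σ i) a, Equiv.symm_apply_apply]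

lemma update_cond_iff [NeZero n] (U w : Fin N → Fin n) (j : Fin N) (r : Fin n) :
    (r = U j ∧ Function.update U j 0 = w) ↔ (w j = 0 ∧ U = Function.update w j r) := by
  constructor
  · rintro ⟨h1, rfl⟩
    refine ⟨Function.update_self _ _ _, ?_⟩
    funext x
    rcases eq_or_ne x j with rfl | hx
    · simp [← h1]
    · simp [Function.update_of_ne hx]
  · rintro ⟨h1, rfl⟩
    refine ⟨by simp, ?_⟩
    rw [Function.update_idem, ← h1, Function.update_eq_self]

lemma currentOp_T [NeZero n] (r : Fin n) (k : ℕ) (w : Fin N → Fin n)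
    (p : MvPolynomial (Fin N) ℂ) :
    currentOp (Matrix.single r 0 1) k (T w p)
      = fun u => ∑ j : Fin N,
          if w j = 0 then T (Function.update w j r) (X j ^ k * p) u else 0 := by
  funext u
  simp only [currentOp]
  have inner : ∀ i : Fin N,
      (∑ a : Fin n, C (Matrix.single r 0 1 (u i) a) * T w p (Function.update u i a))
        = if r = u i then T w p (Function.update u i 0) else 0 := by
    intro i
    by_cases h : r = u i
    · rw [if_pos h]
      have key : ∀ a : Fin n,
          (C (Matrix.single r 0 1 (u i) a) * T w p (Function.update u i a)
            : MvPolynomial (Fin N) ℂ)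
          = if (0 : Fin n) = a then T w p (Function.update u i a) else 0 := by
        intro a
        show (C (if r = u i ∧ (0:Fin n) = a then (1:ℂ) else 0) * _) = _
        by_cases ha : (0 : Fin n) = a
        · rw [if_pos ⟨h, ha⟩, map_one, one_mul, if_pos ha]
        · rw [if_neg (fun hc => ha hc.2), map_zero, zero_mul, if_neg ha]
      rw [Finset.sum_congr rfl (fun a _ => key a), Finset.sum_ite_eq univ (0:Fin n),
        if_pos (mem_univ _)]
    · rw [if_neg h]
      refine Finset.sum_eq_zero fun a _ => ?_
      show (C (if r = u i ∧ (0:Fin n) = a then (1:ℂ) else 0) * _) = 0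
      rw [if_neg (fun hc => h hc.1), map_zero, zero_mul]
  rw [Finset.sum_congr rfl (fun i _ => by rw [inner i])]
  have step2 : ∀ i : Fin N,
      (X i ^ k * (if r = u i then T w p (Function.update u i 0) else 0)
        : MvPolynomial (Fin N) ℂ)
      = ∑ σ : Equiv.Perm (Fin N),
          if (r = u i ∧ Function.update u i 0 ∘ ⇑σ = w) then X i ^ k * rename (⇑σ) p
          else 0 := by
    intro i
    by_cases h : r = u i
    · rw [if_pos h]
      show (X i ^ k * T w p (Function.update u i 0) : MvPolynomial (Fin N) ℂ) = _
      rw [T, Finset.mul_sum]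
      refine Finset.sum_congr rfl fun σ _ => ?_
      by_cases h2 : Function.update u i 0 ∘ ⇑σ = w
      · rw [if_pos h2, if_pos ⟨h, h2⟩]
      · rw [if_neg h2, mul_zero, if_neg (fun hc => h2 hc.2)]
    · rw [if_neg h, mul_zero]
      exact (Finset.sum_eq_zero fun σ _ => if_neg (fun hc => h hc.1)).symm
  rw [Finset.sum_congr rfl fun i _ => step2 i, Finset.sum_comm]
  have rhs : ∀ j : Fin N,
      (if w j = 0 then T (Function.update w j r) (X j ^ k * p) u else 0)
      = ∑ σ : Equiv.Perm (Fin N),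
          if (w j = 0 ∧ u ∘ ⇑σ = Function.update w j r) then X (σ j) ^ k * rename (⇑σ) p
          else 0 := by
    intro j
    by_cases h : w j = 0
    · rw [if_pos h]
      show T (Function.update w j r) (X j ^ k * p) u = _
      rw [T]
      refine Finset.sum_congr rfl fun σ _ => ?_
      by_cases h2 : u ∘ ⇑σ = Function.update w j r
      · rw [if_pos h2, if_pos ⟨h, h2⟩, map_mul, map_pow, rename_X]
      · rw [if_neg h2, if_neg (fun hc => h2 hc.2)]
    · rw [if_neg h]
      exact (Finset.sum_eq_zero fun σ _ => if_neg (fun hc => h hc.1)).symm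
  rw [Finset.sum_congr rfl fun j _ => rhs j]
  conv_rhs => rw [Finset.sum_comm]
  refine Finset.sum_congr rfl ?_
  intro σ _
  rw [← Equiv.sum_comp σ (fun i =>
    if (r = u i ∧ Function.update u i 0 ∘ ⇑σ = w) then X i ^ k * rename (⇑σ) p else 0)]
  refine Finset.sum_congr rfl ?_
  intro j _
  refine if_congr ?_ rfl rfl
  rw [update_comp u σ j 0]
  exact update_cond_iff (u ∘ ⇑σ) w j r

end Inv9
namespace Inv9
variable {N n : ℕ}

lemma currentOp_csmul (x : Matrix (Fin n) (Fin n) ℂ) (k : ℕ) (c : ℂ) (F : VN N n) :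
    currentOp x k (c • F) = c • currentOp x k F := by
  funext u
  simp only [currentOp, Pi.smul_apply, smul_eq_C_mul, Finset.mul_sum]
  exact Finset.sum_congr rfl fun i _ => Finset.sum_congr rfl fun a _ => by ring

/-- foldr notation -/
noncomputable def fold [NeZero n] (l : List (Fin n × ℕ)) : VN N n :=
  l.foldr (fun p G => currentOp (Matrix.single p.1 (0 : Fin n) (1 : ℂ)) p.2 G) (w0 N n)

lemma T_Xb_fold [NeZero n] (m : ℕ) : ∀ (w : Fin N → Fin n) (b : Fin N → ℕ),
    (univ.filter fun i => w i ≠ 0).card = m → (∀ i, w i = 0 → b i = 0) →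
    ∃ l : List (Fin n × ℕ), (∀ p ∈ l, p.1 ≠ 0) ∧
      T w (Xb b) = ((N - m).factorial : ℂ) • fold l := by
  induction m with
  | zero =>
    intro w b hcard hb
    have hw : ∀ i, w i = 0 := by
      intro i
      by_contra hne
      have h1 : i ∈ univ.filter (fun i => w i ≠ 0) := mem_filter.2 ⟨mem_univ _, hne⟩
      rw [Finset.card_eq_zero.1 hcard] at h1
      exact absurd h1 (notMem_empty i)
    refine ⟨[], by simp, ?_⟩
    have hXb : Xb b = 1 := by
      rw [Xb]
      refine Finset.prod_eq_one fun i _ => ?_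
      rw [hb i (hw i), pow_zero]
    rw [hXb]
    funext u
    show (∑ σ : Equiv.Perm (Fin N),
        if u ∘ ⇑σ = w then rename (⇑σ) (1 : MvPolynomial (Fin N) ℂ) else 0) = _
    simp only [map_one]
    by_cases hu : u = w
    · subst hu
      have hall : ∀ σ : Equiv.Perm (Fin N), u ∘ ⇑σ = u := by
        intro σ; funext x; simp [hw]
      rw [Finset.sum_congr rfl fun σ _ => if_pos (hall σ), Finset.sum_const, card_univ,
        Fintype.card_perm, Fintype.card_fin]
      have hw0 : (fold [] : VN N n) u = 1 := by
        rw [fold, List.foldr_nil, w0, if_pos (funext hw)]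
      rw [Nat.sub_zero, Pi.smul_apply, hw0, Nat.cast_smul_eq_nsmul]
    · have hz : ∀ σ : Equiv.Perm (Fin N), ¬ (u ∘ ⇑σ = w) := by
        intro σ hσ
        refine hu (funext fun x => ?_)
        have h5 := congrFun hσ (σ.symm x)
        simp only [Function.comp_apply, Equiv.apply_symm_apply] at h5
        rw [h5, hw, hw]
      rw [Finset.sum_congr rfl fun σ _ => if_neg (hz σ), Finset.sum_const, smul_zero]
      have hw0 : (fold [] : VN N n) u = 0 := by
        rw [fold, List.foldr_nil, w0, if_neg (fun h => hu (h.trans (funext fun x => (hw x).symm)))]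
      rw [Pi.smul_apply, hw0, smul_zero]
  | succ m ih =>
    intro w b hcard hb
    have hnem : (univ.filter fun i => w i ≠ 0).Nonempty := Finset.card_pos.1 (by omega)
    obtain ⟨i0, hi0⟩ := hnem
    have hwi0 : w i0 ≠ 0 := (mem_filter.1 hi0).2
    set r := w i0 with hr
    set k := b i0 with hk
    set w' := Function.update w i0 0 with hw'
    set b' := Function.update b i0 0 with hb'def
    have hfilter : (univ.filter fun i => w' i ≠ 0) = (univ.filter fun i => w i ≠ 0).erase i0 := by
      ext x
      simp only [mem_filter, mem_erase, mem_univ, true_and]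
      constructor
      · intro hx
        rcases eq_or_ne x i0 with rfl | hxi
        · rw [hw'] at hx; simp at hx
        · exact ⟨hxi, by rwa [hw', Function.update_of_ne hxi] at hx⟩
      · rintro ⟨hxi, hx⟩
        rwa [hw', Function.update_of_ne hxi]
    have hcard' : (univ.filter fun i => w' i ≠ 0).card = m := by
      rw [hfilter, Finset.card_erase_of_mem hi0, hcard, Nat.add_sub_cancel]
    have hb'h : ∀ i, w' i = 0 → b' i = 0 := by
      intro i hi
      rcases eq_or_ne i i0 with rfl | hxi
      · rw [hb'def]; simp
      · rw [hb'def, Function.update_of_ne hxi]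
        exact hb i (by rwa [hw', Function.update_of_ne hxi] at hi)
    obtain ⟨l', hl', hT'⟩ := ih w' b' hcard' hb'h
    have hmN : m + 1 ≤ N := by
      have h1 := Finset.card_filter_le univ (fun i => w i ≠ 0)
      rw [hcard] at h1; simpa using h1
    have hXb : X i0 ^ k * Xb b' = Xb b := by
      rw [← Xb_update b' i0 k (by rw [hb'def]; simp)]
      congr 1
      rw [hb'def, Function.update_idem, hk, Function.update_eq_self]
    have hker : ∀ j, w' j = 0 →
        T (Function.update w' j r) (X j ^ k * Xb b') = T w (Xb b) := by
      intro j hj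
      rcases eq_or_ne j i0 with rfl | hji
      · have h1 : Function.update w' j r = w := by
          rw [hw', Function.update_idem, hr, Function.update_eq_self]
        rw [h1, hXb]
      · have hwj : w j = 0 := by rwa [hw', Function.update_of_ne hji] at hj
        have hbj : b j = 0 := hb j hwj
        have h1 : Function.update w' j r = w ∘ ⇑(Equiv.swap j i0) := by
          funext x
          rcases eq_or_ne x j with rfl | hx
          · rw [Function.update_self, Function.comp_apply, Equiv.swap_apply_left, hr]
          rcases eq_or_ne x i0 with rfl | hx2
          · rw [Function.update_of_ne hx, hw', Function.update_self, Function.comp_apply,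
              Equiv.swap_apply_right, hwj]
          · rw [Function.update_of_ne hx, hw', Function.update_of_ne hx2,
              Function.comp_apply, Equiv.swap_apply_of_ne_of_ne hx hx2]
        rw [h1, T_perm]
        have hb'0 : b' j = 0 := by rw [hb'def, Function.update_of_ne hji, hbj]
        have hb'i0 : b' i0 = 0 := by rw [hb'def]; simp
        have hbc : b' ∘ ⇑(Equiv.swap j i0).symm = b' := by
          rw [Equiv.symm_swap]
          funext x
          rcases eq_or_ne x j with rfl | hx
          · show b' (Equiv.swap x i0 x) = b' x
            rw [Equiv.swap_apply_left, hb'i0, hb'0]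
          rcases eq_or_ne x i0 with rfl | hx2
          · show b' (Equiv.swap j x x) = b' x
            rw [Equiv.swap_apply_right, hb'0, hb'i0]
          · show b' (Equiv.swap j i0 x) = b' x
            rw [Equiv.swap_apply_of_ne_of_ne hx hx2]
        rw [map_mul, map_pow, rename_X, Equiv.swap_apply_left, rename_Xb, hbc, hXb]
    have hcur : currentOp (Matrix.single r 0 1) k (T w' (Xb b'))
        = (N - m : ℕ) • T w (Xb b) := by
      rw [currentOp_T]
      funext u
      have hterm : ∀ j : Fin N,
          (if w' j = 0 then T (Function.update w' j r) (X j ^ k * Xb b') u else 0)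
          = if w' j = 0 then T w (Xb b) u else 0 := by
        intro j; by_cases hj : w' j = 0
        · rw [if_pos hj, if_pos hj, hker j hj]
        · rw [if_neg hj, if_neg hj]
      rw [Finset.sum_congr rfl fun j _ => hterm j, ← Finset.sum_filter, Finset.sum_const]
      have h2 : (univ.filter fun j => w' j ≠ 0).card
          + (univ.filter fun j => ¬ (w' j ≠ 0)).card = N := by
        rw [Finset.card_filter_add_card_filter_not]; simp
      have h3 : (univ.filter fun j => ¬ (w' j ≠ 0)) = (univ.filter fun j => w' j = 0) :=
        Finset.filter_congr fun j _ => by simp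
      rw [h3, hcard'] at h2
      have hcc : (univ.filter fun j => w' j = 0).card = N - m := by omega
      rw [hcc, Pi.smul_apply]
    rw [hT', currentOp_csmul] at hcur
    refine ⟨(r, k) :: l', ?_, ?_⟩
    · intro p hp
      rcases List.mem_cons.1 hp with rfl | hmem
      · exact hwi0
      · exact hl' p hmem
    have hfold : (fold ((r, k) :: l') : VN N n)
        = currentOp (Matrix.single r 0 1) k (fold l') := rfl
    have hne0 : ((N - m : ℕ) : ℂ) ≠ 0 := Nat.cast_ne_zero.2 (by omega)
    have hc2 : ((N - m : ℕ) : ℂ) • T w (Xb b)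
        = ((N - m).factorial : ℂ) • (fold ((r, k) :: l') : VN N n) := by
      rw [Nat.cast_smul_eq_nsmul, hfold, ← hcur]
    have hNm : N - m = (N - (m + 1)) + 1 := by omega
    have hfac : ((N - m).factorial : ℂ)
        = ((N - m : ℕ) : ℂ) * ((N - (m + 1)).factorial : ℂ) := by
      rw [hNm, Nat.factorial_succ, ← hNm]; push_cast; ring
    calc T w (Xb b) = ((N - m : ℕ) : ℂ)⁻¹ • (((N - m : ℕ) : ℂ) • T w (Xb b)) :=
          (inv_smul_smul₀ hne0 _).symm
      _ = ((N - (m + 1)).factorial : ℂ) • (fold ((r, k) :: l') : VN N n) := by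
          rw [hc2, hfac, mul_smul, inv_smul_smul₀ hne0]

end Inv9

namespace Inv9
variable {N n : ℕ}

noncomputable abbrev RR (N : ℕ) := MvPolynomial.symmetricSubalgebra (Fin N) ℂ

lemma smul_coe (r : RR N) (p : MvPolynomial (Fin N) ℂ) :
    r • p = (r : MvPolynomial (Fin N) ℂ) * p := by
  rw [Algebra.smul_def]; rfl

/-- Submodule over symmetric polynomials generated by monomials supported in `S`. -/
noncomputable def MS (S : Finset (Fin N)) : Submodule (RR N) (MvPolynomial (Fin N) ℂ) :=
  Submodule.span (RR N) {q | ∃ b : Fin N → ℕ, (∀ i ∉ S, b i = 0) ∧ q = Xb b}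

lemma csmul_mem {M : Submodule (RR N) (MvPolynomial (Fin N) ℂ)} {p : MvPolynomial (Fin N) ℂ}
    (c : ℂ) (h : p ∈ M) : c • p ∈ M := by
  have hc : c • p = (⟨C c, (mem_symmetricSubalgebra _).2 (isSymmetric_C c)⟩ : RR N) • p := by
    rw [smul_coe, smul_eq_C_mul]
  rw [hc]
  exact M.smul_mem _ h

end Inv9
namespace Inv9
variable {N : ℕ}

lemma sym_mem (d : ℕ) : ∀ S : Finset (Fin N), Sᶜ.card ≤ d →
    ∀ P : MvPolynomial (Fin N) ℂ,
      (∀ τ : Equiv.Perm (Fin N), (∀ i ∈ S, τ i = i) → rename (⇑τ) P = P) → P ∈ MS S := by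
  induction d with
  | zero =>
    intro S hS P _
    have hSuniv : S = univ := by
      have h0 : Sᶜ = ∅ := Finset.card_eq_zero.1 (Nat.le_zero.1 hS)
      rwa [Finset.compl_eq_empty_iff] at h0
    subst hSuniv
    rw [← support_sum_monomial_coeff P]
    refine Submodule.sum_mem _ fun v _ => ?_
    have hm : (monomial v) (coeff v P) = (coeff v P) • Xb (⇑v) := by
      rw [smul_eq_C_mul, monomial_eq]
      congr 1
      rw [Finsupp.prod_fintype]
      · rfl
      · intro i; exact pow_zero _
    rw [hm]
    exact csmul_mem _ (Submodule.subset_span ⟨⇑v, fun i hi => absurd (mem_univ i) hi, rfl⟩)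
  | succ d ih =>
    intro S hS P hP
    by_cases hd : Sᶜ.card ≤ d
    · exact ih S hd P hP
    have hcard : Sᶜ.card = d + 1 := by omega
    have hne : Sᶜ.Nonempty := Finset.card_pos.1 (by omega)
    obtain ⟨j, hj⟩ := hne
    have hjS : j ∉ S := Finset.mem_compl.1 hj
    have hS' : ((insert j S)ᶜ).card ≤ d := by
      rw [Finset.compl_insert, Finset.card_erase_of_mem hj, hcard, Nat.add_sub_cancel]
    have hPS' : P ∈ MS (insert j S) :=
      ih (insert j S) hS' P (fun τ hτ => hP τ (fun i hi => hτ i (mem_insert_of_mem hi)))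
    -- the averaging operator
    set A : MvPolynomial (Fin N) ℂ → MvPolynomial (Fin N) ℂ :=
      fun q => ∑ i ∈ Sᶜ, rename ⇑(Equiv.swap j i) q with hA
    have hAP : A P = (d + 1 : ℕ) • P := by
      show (∑ i ∈ Sᶜ, rename ⇑(Equiv.swap j i) P) = (d + 1 : ℕ) • P
      have : ∀ i ∈ Sᶜ, rename ⇑(Equiv.swap j i) P = P := by
        intro i hi
        refine hP _ fun x hx => ?_
        exact Equiv.swap_apply_of_ne_of_ne (fun h => hjS (h ▸ hx))
          (fun h => (Finset.mem_compl.1 hi) (h ▸ hx))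
      rw [Finset.sum_congr rfl this, Finset.sum_const, hcard]
    have hmem : A P ∈ MS S := by
      refine Submodule.span_induction ?_ ?_ ?_ ?_ hPS'
      · -- generators
        rintro q ⟨b, hb, rfl⟩
        have hterm : ∀ i ∈ Sᶜ, rename ⇑(Equiv.swap j i) (Xb b)
            = X i ^ (b j) * Xb (Function.update b j 0) := by
          intro i hi
          have hiS : i ∉ S := Finset.mem_compl.1 hi
          rw [rename_Xb, Equiv.symm_swap]
          rcases eq_or_ne i j with rfl | hij
          · rw [Equiv.swap_self]
            have hc : b ∘ ⇑(Equiv.refl (Fin N)) = b := rfl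
            rw [hc, ← Xb_update (Function.update b i 0) i (b i) (by simp),
              Function.update_idem, Function.update_eq_self]
          · have hbi : b i = 0 := hb i (by simp [hiS, hij])
            have hc : b ∘ ⇑(Equiv.swap j i) = Function.update (Function.update b j 0) i (b j) := by
              funext x
              rcases eq_or_ne x i with rfl | hx
              · simp only [Function.comp_apply, Equiv.swap_apply_right, Function.update_self]
              rcases eq_or_ne x j with rfl | hx2
              · simp only [Function.comp_apply, Equiv.swap_apply_left,
                  Function.update_of_ne hx, Function.update_self, hbi]
              · simp only [Function.comp_apply, Equiv.swap_apply_of_ne_of_ne hx2 hx,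
                  Function.update_of_ne hx, Function.update_of_ne hx2]
            rw [hc, Xb_update _ i (b j) (by rw [Function.update_of_ne hij, hbi])]
        show (∑ i ∈ Sᶜ, rename ⇑(Equiv.swap j i) (Xb b)) ∈ MS S
        rw [Finset.sum_congr rfl hterm, ← Finset.sum_mul]
        have hsplit : (∑ i ∈ Sᶜ, (X i ^ (b j) : MvPolynomial (Fin N) ℂ))
            = psum (Fin N) ℂ (b j) - ∑ i ∈ S, X i ^ (b j) := by
          rw [eq_sub_iff_add_eq, psum]
          exact Finset.sum_compl_add_sum S _
        rw [hsplit, sub_mul]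
        refine Submodule.sub_mem _ ?_ ?_
        · have h1 : psum (Fin N) ℂ (b j) * Xb (Function.update b j 0)
              = (⟨psum (Fin N) ℂ (b j),
                  (mem_symmetricSubalgebra _).2 (psum_isSymmetric _ _ _)⟩ : RR N)
                • Xb (Function.update b j 0) := by rw [smul_coe]
          rw [h1]
          refine Submodule.smul_mem _ _ (Submodule.subset_span ⟨_, ?_, rfl⟩)
          intro i hi
          rcases eq_or_ne i j with rfl | hij
          · simp
          · rw [Function.update_of_ne hij]
            exact hb i (by simp [hi, hij])
        · rw [Finset.sum_mul]
          refine Submodule.sum_mem _ fun i hi => ?_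
          rw [← Xb_mul_single (Function.update b j 0) i (b j)]
          refine Submodule.subset_span ⟨_, ?_, rfl⟩
          intro x hx
          have hxi : x ≠ i := fun h => hx (h ▸ hi)
          rw [if_neg hxi, add_zero]
          rcases eq_or_ne x j with rfl | hxj
          · simp
          · rw [Function.update_of_ne hxj]
            exact hb x (by simp [hx, hxj])
      · have : A 0 = 0 := by
          show (∑ i ∈ Sᶜ, rename ⇑(Equiv.swap j i) (0:MvPolynomial (Fin N) ℂ)) = 0
          simp
        rw [this]; exact Submodule.zero_mem _
      · intro x y _ _ hx hy
        have : A (x + y) = A x + A y := by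
          show (∑ i ∈ Sᶜ, rename ⇑(Equiv.swap j i) (x + y)) = _
          simp [Finset.sum_add_distrib]; rfl
        rw [this]; exact Submodule.add_mem _ hx hy
      · intro r x _ hx
        have : A (r • x) = r • A x := by
          show (∑ i ∈ Sᶜ, rename ⇑(Equiv.swap j i) (r • x))
              = r • ∑ i ∈ Sᶜ, rename ⇑(Equiv.swap j i) x
          have h1 : ∀ i ∈ Sᶜ, rename ⇑(Equiv.swap j i) (r • x)
              = r • rename ⇑(Equiv.swap j i) x := by
            intro i _
            rw [smul_coe, smul_coe, map_mul,
              (mem_symmetricSubalgebra _).1 r.2 (Equiv.swap j i)]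
          rw [Finset.sum_congr rfl h1, ← Finset.smul_sum]
        rw [this]; exact Submodule.smul_mem _ _ hx
    have hfin : P = ((d + 1 : ℕ) : ℂ)⁻¹ • A P := by
      rw [hAP, ← Nat.cast_smul_eq_nsmul ℂ, inv_smul_smul₀ (by exact_mod_cast Nat.succ_ne_zero d)]
    rw [hfin]
    exact csmul_mem _ hmem

end Inv9

namespace Inv9
variable {N n : ℕ}

/-- The set `F_N` of iterated current-operator images of `w₀`. -/
def GenSet (N n : ℕ) [NeZero n] : Set (VN N n) :=
  {g | ∃ l : List (Fin n × ℕ), (∀ p ∈ l, p.1 ≠ 0) ∧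
    g = l.foldr
      (fun p G => currentOp (Matrix.single p.1 (0 : Fin n) (1 : ℂ)) p.2 G)
      (w0 N n)}

lemma fold_mem_GenSet [NeZero n] (l : List (Fin n × ℕ)) (hl : ∀ p ∈ l, p.1 ≠ 0) :
    (fold l : VN N n) ∈ GenSet N n := ⟨l, hl, rfl⟩

noncomputable def MV (N n : ℕ) [NeZero n] : Submodule (RR N) (VN N n) :=
  Submodule.span (RR N) (GenSet N n)

lemma smul_coe_fn (r : RR N) (F : VN N n) (v : Fin N → Fin n) :
    (r • F) v = (r : MvPolynomial (Fin N) ℂ) * F v := by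
  rw [Pi.smul_apply, Algebra.smul_def]; rfl

lemma csmul_mem_VN [NeZero n] {M : Submodule (RR N) (VN N n)} {F : VN N n}
    (c : ℂ) (h : F ∈ M) : c • F ∈ M := by
  have hc : c • F = (⟨C c, (mem_symmetricSubalgebra _).2 (isSymmetric_C c)⟩ : RR N) • F := by
    funext v
    rw [smul_coe_fn, Pi.smul_apply, smul_eq_C_mul]
  rw [hc]
  exact M.smul_mem _ h

lemma T_monomial_mem [NeZero n] (w : Fin N → Fin n) (b : Fin N → ℕ)
    (hb : ∀ i, w i = 0 → b i = 0) : T w (Xb b) ∈ MV N n := by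
  obtain ⟨l, hl, hT⟩ := T_Xb_fold (univ.filter fun i => w i ≠ 0).card w b rfl hb
  rw [hT]
  exact csmul_mem_VN _ (Submodule.subset_span (fold_mem_GenSet l hl))

lemma T_MS_mem [NeZero n] (w : Fin N → Fin n) {q : MvPolynomial (Fin N) ℂ}
    (hq : q ∈ MS (univ.filter fun i => w i ≠ 0)) : T w q ∈ MV N n := by
  refine Submodule.span_induction ?_ ?_ ?_ ?_ hq
  · rintro q ⟨b, hb, rfl⟩
    refine T_monomial_mem w b fun i hi => hb i ?_
    simp [hi]
  · rw [T_zero]; exact Submodule.zero_mem _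
  · intro x y _ _ hx hy; rw [T_add]; exact Submodule.add_mem _ hx hy
  · intro r x _ hx
    have h1 : T w (r • x) = r • T w x := by
      rw [smul_coe, T_mul_symm w ((mem_symmetricSubalgebra _).1 r.2) x]
      funext u; rw [smul_coe_fn]
    rw [h1]; exact Submodule.smul_mem _ _ hx

lemma T_mem [NeZero n] (w : Fin N → Fin n) (p : MvPolynomial (Fin N) ℂ) :
    T w p ∈ MV N n := by
  classical
  set S := univ.filter fun i => w i ≠ 0 with hS
  set Hs := univ.filter (fun τ : Equiv.Perm (Fin N) => ∀ i ∈ S, τ i = i) with hHs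
  have hone : (1 : Equiv.Perm (Fin N)) ∈ Hs := mem_filter.2 ⟨mem_univ _, fun i _ => rfl⟩
  have hfix : ∀ τ ∈ Hs, ∀ i, w (τ i) = w i := by
    intro τ hτ i
    by_cases hi : i ∈ S
    · rw [(mem_filter.1 hτ).2 i hi]
    · have hwi : w i = 0 := by
        by_contra h; exact hi (mem_filter.2 ⟨mem_univ _, h⟩)
      have hti : τ i ∉ S := by
        intro hmem
        have h2 : τ i = i := τ.injective ((mem_filter.1 hτ).2 (τ i) hmem)
        exact hi (h2 ▸ hmem)
      have h3 : w (τ i) = 0 := by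
        by_contra h; exact hti (mem_filter.2 ⟨mem_univ _, h⟩)
      rw [h3, hwi]
  have hTinv : ∀ τ ∈ Hs, T w (rename ⇑τ p) = T w p := by
    intro τ hτ
    have hwc : w ∘ ⇑τ = w := funext (hfix τ hτ)
    rw [← T_perm, hwc]
  set P := ∑ τ ∈ Hs, rename ⇑τ p with hPdef
  have hsum : T w P = Hs.card • T w p := by
    rw [hPdef, T_sum, Finset.sum_congr rfl hTinv, Finset.sum_const]
  have hPinv : ∀ τ' : Equiv.Perm (Fin N), (∀ i ∈ S, τ' i = i) → rename ⇑τ' P = P := by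
    intro τ' hτ'
    rw [hPdef, map_sum]
    have h1 : ∀ τ ∈ Hs, rename ⇑τ' (rename ⇑τ p) = rename ⇑(τ' * τ) p := by
      intro τ _; rw [rename_rename]; rfl
    rw [Finset.sum_congr rfl h1]
    refine Finset.sum_nbij' (fun τ => τ' * τ) (fun ρ => τ'⁻¹ * ρ) ?_ ?_ ?_ ?_ ?_
    · intro τ hτ
      refine mem_filter.2 ⟨mem_univ _, fun i hi => ?_⟩
      rw [Equiv.Perm.mul_apply, (mem_filter.1 hτ).2 i hi, hτ' i hi]
    · intro ρ hρ
      refine mem_filter.2 ⟨mem_univ _, fun i hi => ?_⟩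
      have h2 : τ'⁻¹ i = i := by
        show τ'.symm i = i
        exact (Equiv.symm_apply_eq τ').2 (hτ' i hi).symm
      rw [Equiv.Perm.mul_apply, (mem_filter.1 hρ).2 i hi, h2]
    · intro τ _; group
    · intro ρ _; group
    · intro τ _; rfl
  have hPmem : P ∈ MS S := sym_mem Sᶜ.card S le_rfl P hPinv
  have hTP : T w P ∈ MV N n := T_MS_mem w hPmem
  have hcne : ((Hs.card : ℕ) : ℂ) ≠ 0 :=
    Nat.cast_ne_zero.2 (Finset.card_ne_zero_of_mem hone)
  have hfin : T w p = ((Hs.card : ℕ) : ℂ)⁻¹ • T w P := by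
    rw [hsum, ← Nat.cast_smul_eq_nsmul ℂ, inv_smul_smul₀ hcne]
  rw [hfin]
  exact csmul_mem_VN _ hTP

end Inv9


/-- The `S_N`-invariant subspace of `π^{⊗N} ⊗ ℂ[z_1,…,z_N]`
is generated, as a module over the ring of symmetric polynomials, by
`F_N = U(n₋ ⊗ ℂ[t]) · w₀`, where `n₋` is spanned by the commuting matrices
`b_i = E_{1,i+1}` (here `Matrix.single i 0 1` for `i ≠ 0`, so that
`b_i v₀ = v_i`): every invariant `F` is a combination, with symmetric
polynomial coefficients, of vectors of `F_N`. -/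
theorem invariants_generated_by_FN_over_symmetric (N n : ℕ) [NeZero n] :
    ∀ F : VN N n, (∀ σ, diagAct σ F = F) →
      ∃ (k : ℕ) (f : Fin k → MvPolynomial (Fin N) ℂ) (g : Fin k → VN N n),
        (∀ j, (f j).IsSymmetric) ∧
        (∀ j, ∃ l : List (Fin n × ℕ), (∀ p ∈ l, p.1 ≠ 0) ∧
          g j = l.foldr
            (fun p G => currentOp (Matrix.single p.1 (0 : Fin n) (1 : ℂ)) p.2 G)
            (w0 N n)) ∧
        F = fun v => ∑ j, f j * g j v := by
  classical
  intro F hF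
  have key : ∑ w : Fin N → Fin n, Inv9.T w (F w) = N.factorial • F := by
    funext u
    rw [Finset.sum_apply]
    have h1 : ∀ w : Fin N → Fin n, Inv9.T w (F w) u
        = ∑ σ : Equiv.Perm (Fin N), if u ∘ ⇑σ = w then rename ⇑σ (F w) else 0 :=
      fun w => rfl
    rw [Finset.sum_congr rfl fun w _ => h1 w, Finset.sum_comm]
    have h2 : ∀ σ : Equiv.Perm (Fin N),
        (∑ w : Fin N → Fin n, if u ∘ ⇑σ = w then rename ⇑σ (F w) else 0) = F u := by
      intro σ
      rw [Finset.sum_ite_eq univ (u ∘ ⇑σ) (fun w => rename ⇑σ (F w)), if_pos (mem_univ _)]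
      exact congrFun (hF σ) u
    rw [Finset.sum_congr rfl fun σ _ => h2 σ, Finset.sum_const, card_univ,
      Fintype.card_perm, Fintype.card_fin, Pi.smul_apply]
  have hFmem : F ∈ Inv9.MV N n := by
    have hne : ((N.factorial : ℕ) : ℂ) ≠ 0 := Nat.cast_ne_zero.2 (Nat.factorial_ne_zero N)
    have hrepr : F = ((N.factorial : ℕ) : ℂ)⁻¹ • ∑ w : Fin N → Fin n, Inv9.T w (F w) := by
      rw [key, ← Nat.cast_smul_eq_nsmul ℂ, inv_smul_smul₀ hne]
    rw [hrepr]
    exact Inv9.csmul_mem_VN _ (Submodule.sum_mem _ fun w _ => Inv9.T_mem w (F w))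
  obtain ⟨k, f, g, hsum⟩ := Submodule.mem_span_set'.1 hFmem
  refine ⟨k, fun j => ((f j : Inv9.RR N) : MvPolynomial (Fin N) ℂ),
    fun j => (g j : VN N n), ?_, ?_, ?_⟩
  · intro j; exact (mem_symmetricSubalgebra _).1 (f j).2
  · intro j; exact (g j).2
  · rw [← hsum]; funext v; rw [Finset.sum_apply]
    refine Finset.sum_congr rfl fun j _ => ?_
    rw [Inv9.smul_coe_fn]
end

section
/- The Kostka polynomials satisfy the duality K_{μ',(1^N)}(q) = q^{N(N−1)/2} · K_{μ,(1^N)}(q^{−1}) for every partition μ of N, where μ' is the conjugate partition. -/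
open Polynomial Finset
open scoped Classical

/-- `T k` is the cell (row, column) containing the entry `k` of a standard Young
tableau with `N` boxes, of shape `μ` (cells fit inside an `N × N` box). `IsSYT`
says that `T` is a bijection onto the cells of `μ` and that entries increase
along rows and down columns. -/
def IsSYT (N : ℕ) (μ : ℕ → ℕ) (T : Fin N → Fin N × Fin N) : Prop :=
  (∀ k, ((T k).2 : ℕ) < μ ((T k).1 : ℕ)) ∧
  Function.Injective T ∧
  (∀ i j : Fin N, (j : ℕ) < μ (i : ℕ) → ∃ k, T k = (i, j)) ∧
  (∀ k l : Fin N, (T k).1 ≤ (T l).1 → (T k).2 ≤ (T l).2 → T k ≠ T l → k < l)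

/-- Position of a cell in the reading word of the tableau (rows read from the
bottom row upwards, each row from left to right). -/
def readPos (N : ℕ) (μ : ℕ → ℕ) (c : Fin N × Fin N) : ℕ :=
  (∑ i ∈ Finset.Ico ((c.1 : ℕ) + 1) N, μ i) + (c.2 : ℕ)

/-- The charge indices of a standard word: `c_1 = 0`, and
`c_{r+1} = c_r + 1` exactly when the entry `r+1` lies to the right of the entry
`r` in the reading word; `p r` is the position of entry `r`. -/
def chargeAux (p : ℕ → ℕ) : ℕ → ℕ
  | 0 => 0
  | r + 1 => chargeAux p r + (if p r < p (r + 1) then 1 else 0)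

/-- The charge of a standard Young tableau: the sum of the charge indices of its
reading word. -/
noncomputable def charge (N : ℕ) (μ : ℕ → ℕ) (T : Fin N → Fin N × Fin N) : ℕ :=
  ∑ r ∈ Finset.range N,
    chargeAux (fun k => if h : k < N then readPos N μ (T ⟨k, h⟩) else 0) r

/-- The Kostka–Foulkes polynomial `K_{μ,(1^N)}(q) = Σ_{T ∈ SYT(μ)} q^{charge T}`. -/
noncomputable def kostkaColumn (N : ℕ) (μ : ℕ → ℕ) : Polynomial ℤ :=
  ∑ T ∈ Finset.univ.filter (IsSYT N μ), Polynomial.X ^ charge N μ T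

/-- The conjugate partition `μ'`: `μ'_j = #{i | μ_i > j}` (0-indexed). -/
def conjPart (N : ℕ) (μ : ℕ → ℕ) (j : ℕ) : ℕ :=
  ((Finset.range N).filter fun i => j < μ i).card

/-- The hook length of the (0-indexed) cell `(i,j)` of `μ`. -/
def hook (N : ℕ) (μ : ℕ → ℕ) (i j : ℕ) : ℕ :=
  μ i + conjPart N μ j - i - j - 1

/-!
Transposition `T ↦ Tᵀ` is a bijection from standard tableaux of shape `μ` to those of shape
`μ'`. In the reading word, `r + 1` lies to the right of `r` exactly when `r + 1` sits weakly
above `r` in the tableau; for consecutive entries of a standard tableau this happens in `T`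
exactly when it fails in `Tᵀ`. Hence the charge indices of `T` and `Tᵀ` add up to `r`, and
`charge T + charge Tᵀ = 0 + 1 + ⋯ + (N - 1) = N(N-1)/2`.
-/

variable {N : ℕ} {μ : ℕ → ℕ}

theorem conjPart_antitone (N : ℕ) (μ : ℕ → ℕ) : Antitone (conjPart N μ) :=
  fun _ _ hab => card_le_card <| monotone_filter_right _ fun _ _ h => hab.trans_lt h

theorem lt_conjPart_iff (hμ : Antitone μ) {i j : ℕ} :
    j < conjPart N μ i ↔ j < N ∧ i < μ j := by
  constructor
  · intro h
    have hjN : j < N := h.trans_le ((card_filter_le _ _).trans_eq (card_range N))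
    refine ⟨hjN, not_le.1 fun hμj => h.not_ge ?_⟩
    calc conjPart N μ i ≤ #(range j) := card_le_card fun x hx => by
          simp only [mem_filter, mem_range] at hx ⊢
          exact not_le.1 fun hjx => (hx.2.trans_le (hμ hjx)).not_ge hμj
      _ = j := card_range j
  · rintro ⟨hjN, hij⟩
    calc j < #(range (j + 1)) := by simp
      _ ≤ conjPart N μ i := card_le_card fun x hx => by
          simp only [mem_filter, mem_range] at hx ⊢
          exact ⟨by omega, hij.trans_le (hμ (by omega))⟩

theorem lt_conjPart_conjPart_iff (hμ : Antitone μ) (i j : Fin N) :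
    (j : ℕ) < conjPart N (conjPart N μ) i ↔ (j : ℕ) < μ i := by
  simp [lt_conjPart_iff (conjPart_antitone N μ), lt_conjPart_iff hμ]

theorem isSYT_congr {μ₁ μ₂ : ℕ → ℕ} (h : ∀ i j : Fin N, (j : ℕ) < μ₁ i ↔ (j : ℕ) < μ₂ i)
    {T : Fin N → Fin N × Fin N} : IsSYT N μ₁ T ↔ IsSYT N μ₂ T := by
  simp only [IsSYT, h]

theorem swap_comp_swap_comp {α β γ : Type*} (f : α → β × γ) : Prod.swap ∘ (Prod.swap ∘ f) = f :=
  funext fun _ => Prod.swap_swap _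

theorem IsSYT.transpose (hμ : Antitone μ) {T : Fin N → Fin N × Fin N} (hT : IsSYT N μ T) :
    IsSYT N (conjPart N μ) (Prod.swap ∘ T) := by
  obtain ⟨hshape, hinj, hsurj, hmono⟩ := hT
  refine ⟨fun k => (lt_conjPart_iff hμ).2 ⟨(T k).1.isLt, hshape k⟩,
    Prod.swap_injective.comp hinj, fun i j hj => ?_, fun k l hrow hcol hne => ?_⟩
  · obtain ⟨k, hk⟩ := hsurj j i ((lt_conjPart_iff hμ).1 hj).2
    exact ⟨k, by simp [hk]⟩
  · exact hmono k l hcol hrow fun h => hne (by simp [h])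

theorem isSYT_conjPart_swap_iff (hμ : Antitone μ) {T : Fin N → Fin N × Fin N} :
    IsSYT N (conjPart N μ) (Prod.swap ∘ T) ↔ IsSYT N μ T := by
  refine ⟨fun h => ?_, IsSYT.transpose hμ⟩
  have := h.transpose (conjPart_antitone N μ)
  rwa [swap_comp_swap_comp, isSYT_congr (lt_conjPart_conjPart_iff hμ)] at this

theorem readPos_lt_readPos_of_fst_lt {a b : Fin N × Fin N} (ha : (a.2 : ℕ) < μ a.1)
    (hab : b.1 < a.1) : readPos N μ a < readPos N μ b := by
  have hsplit := sum_Ico_consecutive μ (show (b.1 : ℕ) + 1 ≤ a.1 + 1 by omega)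
    (show (a.1 : ℕ) + 1 ≤ N from a.1.isLt)
  have hsingle : μ a.1 ≤ ∑ i ∈ Ico ((b.1 : ℕ) + 1) (a.1 + 1), μ i :=
    single_le_sum (fun _ _ => Nat.zero_le _) (mem_Ico.2 ⟨hab, Nat.lt_succ_self _⟩)
  unfold readPos
  omega

namespace IsSYT

variable {T : Fin N → Fin N × Fin N} {k l : Fin N}

theorem fst_le_iff_snd_lt (hμ : Antitone μ) (hT : IsSYT N μ T) (hkl : (l : ℕ) = k + 1) :
    (T l).1 ≤ (T k).1 ↔ (T k).2 < (T l).2 := by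
  obtain ⟨hshape, hinj, hsurj, hmono⟩ := hT
  have hne : T l ≠ T k := fun h => by simpa [hkl] using congrArg Fin.val (hinj h)
  refine ⟨fun hrow => not_le.1 fun hcol => ?_, fun hcol => not_lt.1 fun hrow => ?_⟩
  · have := hmono l k hrow hcol hne
    omega
  · -- the cell in the row of `k` and the column of `l` would hold an entry strictly between
    obtain ⟨m, hm⟩ := hsurj (T k).1 (T l).2 ((hshape l).trans_le (hμ hrow.le))
    have hkm : k < m := hmono k m (by simp [hm]) (by simp [hm, hcol.le])
      fun h => hcol.ne (by rw [h, hm])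
    have hml : m < l := hmono m l (by simp [hm, hrow.le]) (by simp [hm])
      fun h => hrow.ne (by rw [← h, hm])
    omega

theorem readPos_lt_iff (hμ : Antitone μ) (hT : IsSYT N μ T) (hkl : (l : ℕ) = k + 1) :
    readPos N μ (T k) < readPos N μ (T l) ↔ (T l).1 ≤ (T k).1 := by
  refine ⟨fun h => not_lt.1 fun hrow => ?_, fun hrow => ?_⟩
  · exact (readPos_lt_readPos_of_fst_lt (hT.1 l) hrow).not_gt h
  · rcases hrow.lt_or_eq with hlt | heq
    · exact readPos_lt_readPos_of_fst_lt (hT.1 k) hlt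
    · have hcol := (fst_le_iff_snd_lt hμ hT hkl).1 hrow
      simp only [readPos, heq]
      omega

end IsSYT

theorem chargeAux_add_chargeAux {p q : ℕ → ℕ} {n : ℕ}
    (h : ∀ r, r + 1 < n → (q r < q (r + 1) ↔ ¬ p r < p (r + 1))) :
    ∀ r < n, chargeAux q r + chargeAux p r = r := by
  intro r hr
  induction r with
  | zero => rfl
  | succ r ih =>
    have := ih (by omega)
    by_cases hp : p r < p (r + 1) <;> simp [chargeAux, hp, h r hr] <;> omega

theorem charge_transpose_add_charge (hμ : Antitone μ) {T : Fin N → Fin N × Fin N}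
    (hT : IsSYT N μ T) :
    charge N (conjPart N μ) (Prod.swap ∘ T) + charge N μ T = N * (N - 1) / 2 := by
  have hT' := hT.transpose hμ
  rw [charge, charge, ← sum_add_distrib, ← sum_range_id]
  refine sum_congr rfl fun r hr => chargeAux_add_chargeAux (fun r hr => ?_) r (mem_range.1 hr)
  have hkl : ((⟨r + 1, hr⟩ : Fin N) : ℕ) = (⟨r, by omega⟩ : Fin N) + 1 := rfl
  simp only [dif_pos hr, dif_pos (show r < N by omega)]
  rw [hT'.readPos_lt_iff (conjPart_antitone N μ) hkl, hT.readPos_lt_iff hμ hkl,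
    hT.fst_le_iff_snd_lt hμ hkl]
  simp

theorem kostka_conjugate_duality_general (N : ℕ) (μ : ℕ → ℕ) (hμ : Antitone μ) :
    kostkaColumn N (conjPart N μ) =
      ∑ T ∈ Finset.univ.filter (IsSYT N μ),
        (Polynomial.X : Polynomial ℤ) ^ (N * (N - 1) / 2 - charge N μ T) := by
  have hswap_iff (T : Fin N → Fin N × Fin N) :
      IsSYT N μ (Prod.swap ∘ T) ↔ IsSYT N (conjPart N μ) T := by
    rw [← isSYT_conjPart_swap_iff hμ, swap_comp_swap_comp]
  refine sum_nbij' (Prod.swap ∘ ·) (Prod.swap ∘ ·) (fun T hT => ?_) (fun T hT => ?_)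
    (fun T _ => swap_comp_swap_comp T) (fun T _ => swap_comp_swap_comp T) (fun T hT => ?_)
  · simpa [hswap_iff] using hT
  · simpa [isSYT_conjPart_swap_iff hμ] using hT
  · have hT : IsSYT N μ (Prod.swap ∘ T) := (hswap_iff T).2 (mem_filter.1 hT).2
    have hcharge := charge_transpose_add_charge hμ hT
    rw [swap_comp_swap_comp] at hcharge
    rw [← hcharge, Nat.add_sub_cancel]

/-- Duality of Kostka polynomials:
`K_{μ',(1^N)}(q) = q^{N(N-1)/2} · K_{μ,(1^N)}(q⁻¹)` for every partition `μ` of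
`N`, where `μ'` is the conjugate partition.  Since
`K_{μ,(1^N)}(q) = Σ_{T∈SYT(μ)} q^{charge T}`, the right-hand side is
`Σ_{T∈SYT(μ)} q^{N(N-1)/2 - charge T}`. -/
theorem kostka_conjugate_duality (N : ℕ) (μ : ℕ → ℕ) (hμ : Antitone μ)
    (hsum : ∑ i ∈ Finset.range N, μ i = N) (hzero : ∀ i, N ≤ i → μ i = 0) :
    kostkaColumn N (conjPart N μ) =
      ∑ T ∈ Finset.univ.filter (IsSYT N μ),
        (Polynomial.X : Polynomial ℤ) ^ (N * (N - 1) / 2 - charge N μ T) :=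
  kostka_conjugate_duality_general N μ hμ
end
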